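/- Let G = (ZMod 2)^n model an n-vertex complete graph function: f : G → ℝ has normalized Walsh–Hadamard transform f̂ with value −a at each of the n(n−1)/2 degree-2 indices, value d at each of the n degree-1 indices with d² = 1, and 0 elsewhere (including the zero index). Then the second central moment of f equals n + n(n−1)a²/2 and the third central moment equals −3n(n−1)a − n(n−1)(n−2)a³. -/

import Mathlib

open scoped BigOperators

/-- Normalized Walsh–Hadamard transform on `(ZMod 2)^n`:
`f̂(j) = (1/2^n) ∑ i, (-1)^{⟨i,j⟩} f(i)`. -/
noncomputable def wht {n : ℕ} (f : (Fin n → ZMod 2) → ℂ) (j : Fin n → ZMod 2) : ℂ :=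
  ((2 : ℂ) ^ n)⁻¹ * ∑ i, (-1 : ℂ) ^ (∑ ℓ, (i ℓ).val * (j ℓ).val) * f i

/-- The degree of an index `j ∈ (ZMod 2)^n`: the number of nonzero coordinates. -/
def degIdx {n : ℕ} (j : Fin n → ZMod 2) : ℕ :=
  (Finset.univ.filter (fun ℓ => j ℓ ≠ 0)).card

section Aux

open Finset

lemma chi_prod {n : ℕ} (i j : Fin n → ZMod 2) :
    (-1 : ℂ) ^ (∑ ℓ, (i ℓ).val * (j ℓ).val) = ∏ ℓ, (-1 : ℂ) ^ ((i ℓ).val * (j ℓ).val) :=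
  (Finset.prod_pow_eq_pow_sum _ _ _).symm

lemma zmod2_cases (x : ZMod 2) : x = 0 ∨ x = 1 := by revert x; decide

lemma chi_mul_pt (x y z : ZMod 2) :
    (-1 : ℂ) ^ (x.val * z.val) * (-1 : ℂ) ^ (y.val * z.val)
      = (-1 : ℂ) ^ (((x + y) : ZMod 2).val * z.val) := by
  rcases zmod2_cases x with hx | hx <;> rcases zmod2_cases y with hy | hy <;>
    rcases zmod2_cases z with hz | hz <;> subst hx <;> subst hy <;> subst hz <;>
    norm_num [show ((1 + 1 : ZMod 2)).val = 0 from rfl, show ((2 : ZMod 2)).val = 0 from rfl, show ((1 : ZMod 2)).val = 1 from rfl]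

lemma zmod2_add_eq_zero (x y : ZMod 2) : x + y = 0 ↔ x = y := by revert x y; decide

lemma ortho {n : ℕ} (h : Fin n → ZMod 2) :
    ∑ j : Fin n → ZMod 2, ∏ ℓ, (-1 : ℂ) ^ ((h ℓ).val * (j ℓ).val)
      = if h = 0 then (2 : ℂ) ^ n else 0 := by
  have key : ∏ ℓ : Fin n, (∑ x : ZMod 2, (-1 : ℂ) ^ ((h ℓ).val * x.val))
      = ∑ j : Fin n → ZMod 2, ∏ ℓ, (-1 : ℂ) ^ ((h ℓ).val * (j ℓ).val) :=
    Fintype.prod_sum (κ := fun _ : Fin n => ZMod 2)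
      (fun ℓ (x : ZMod 2) => (-1 : ℂ) ^ ((h ℓ).val * x.val))
  rw [← key]
  have pt : ∀ ℓ : Fin n, (∑ x : ZMod 2, (-1 : ℂ) ^ ((h ℓ).val * x.val))
      = if h ℓ = 0 then 2 else 0 := by
    intro ℓ
    have hu : (Finset.univ : Finset (ZMod 2)) = {0, 1} := by decide
    rw [hu]
    rcases zmod2_cases (h ℓ) with hx | hx <;> rw [hx] <;>
      norm_num [show ((1 : ZMod 2)).val = 1 from rfl]
  simp_rw [pt]
  by_cases h0 : h = 0
  · subst h0; simp
  · rw [if_neg h0]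
    obtain ⟨ℓ, hℓ⟩ : ∃ ℓ, h ℓ ≠ 0 := by
      by_contra hc; push_neg at hc; exact h0 (funext hc)
    exact Finset.prod_eq_zero (Finset.mem_univ ℓ) (by rw [if_neg hℓ])

lemma chi_mul {n : ℕ} (i i' j : Fin n → ZMod 2) :
    (-1 : ℂ) ^ (∑ ℓ, (i ℓ).val * (j ℓ).val) * (-1 : ℂ) ^ (∑ ℓ, (i' ℓ).val * (j ℓ).val)
      = ∏ ℓ, (-1 : ℂ) ^ ((((i + i') : Fin n → ZMod 2) ℓ).val * (j ℓ).val) := by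
  rw [chi_prod, chi_prod, ← Finset.prod_mul_distrib]
  exact Finset.prod_congr rfl fun ℓ _ => chi_mul_pt (i ℓ) (i' ℓ) (j ℓ)

lemma chi_sum {n : ℕ} (i i' : Fin n → ZMod 2) :
    ∑ j : Fin n → ZMod 2,
        (-1 : ℂ) ^ (∑ ℓ, (i ℓ).val * (j ℓ).val) * (-1 : ℂ) ^ (∑ ℓ, (i' ℓ).val * (j ℓ).val)
      = if i' = i then (2 : ℂ) ^ n else 0 := by
  simp_rw [chi_mul]
  rw [ortho]
  congr 1
  simp only [eq_iff_iff]
  constructor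
  · intro h; funext ℓ
    have := congrFun h ℓ
    exact ((zmod2_add_eq_zero (i ℓ) (i' ℓ)).mp this).symm
  · rintro rfl; funext ℓ
    exact (zmod2_add_eq_zero _ _).mpr rfl

lemma inversion {n : ℕ} (f : (Fin n → ZMod 2) → ℂ) (i : Fin n → ZMod 2) :
    f i = ∑ j : Fin n → ZMod 2,
      (-1 : ℂ) ^ (∑ ℓ, (i ℓ).val * (j ℓ).val) * wht f j := by
  have h2 : ((2 : ℂ) ^ n) ≠ 0 := pow_ne_zero _ two_ne_zero
  have step : ∀ j : Fin n → ZMod 2,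
      (-1 : ℂ) ^ (∑ ℓ, (i ℓ).val * (j ℓ).val) * wht f j
        = ∑ i', ((2 : ℂ) ^ n)⁻¹ * (f i' *
            ((-1 : ℂ) ^ (∑ ℓ, (i ℓ).val * (j ℓ).val)
              * (-1 : ℂ) ^ (∑ ℓ, (i' ℓ).val * (j ℓ).val))) := by
    intro j
    rw [wht, Finset.mul_sum, Finset.mul_sum]
    exact Finset.sum_congr rfl fun i' _ => by ring
  simp_rw [step]
  rw [Finset.sum_comm]
  have inner : ∀ i' : Fin n → ZMod 2,
      (∑ j : Fin n → ZMod 2, ((2 : ℂ) ^ n)⁻¹ * (f i' *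
        ((-1 : ℂ) ^ (∑ ℓ, (i ℓ).val * (j ℓ).val)
          * (-1 : ℂ) ^ (∑ ℓ, (i' ℓ).val * (j ℓ).val))))
      = if i' = i then f i' else 0 := by
    intro i'
    rw [← Finset.mul_sum, ← Finset.mul_sum, chi_sum i i']
    by_cases h : i' = i
    · rw [if_pos h, if_pos h]; field_simp
    · rw [if_neg h, if_neg h]; ring
  simp_rw [inner]
  simp

lemma chi_supp {n : ℕ} (i j : Fin n → ZMod 2) :
    ∏ ℓ, (-1 : ℂ) ^ ((i ℓ).val * (j ℓ).val)
      = ∏ ℓ ∈ Finset.univ.filter (fun ℓ => j ℓ ≠ 0), (-1 : ℂ) ^ (i ℓ).val := by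
  rw [Finset.prod_filter]
  refine Finset.prod_congr rfl fun ℓ _ => ?_
  rcases zmod2_cases (j ℓ) with h | h <;> rw [h] <;> simp [show ((1:ZMod 2)).val = 1 from rfl]

-- sum over degree-k indices equals sum over k-subsets

lemma deg_sum_eq {n k : ℕ} (ε : Fin n → ℂ) :
    ∑ j ∈ Finset.univ.filter (fun j : Fin n → ZMod 2 => degIdx j = k),
        ∏ ℓ ∈ Finset.univ.filter (fun ℓ => j ℓ ≠ 0), ε ℓ
      = ∑ S ∈ Finset.powersetCard k (Finset.univ : Finset (Fin n)), ∏ ℓ ∈ S, ε ℓ := by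
  refine Finset.sum_nbij' (fun j => Finset.univ.filter (fun ℓ => j ℓ ≠ 0))
    (fun S => fun ℓ => if ℓ ∈ S then 1 else 0) ?_ ?_ ?_ ?_ ?_
  · intro j hj
    simp only [Finset.mem_filter, Finset.mem_univ, true_and] at hj
    rw [Finset.mem_powersetCard]
    exact ⟨Finset.filter_subset _ _, hj⟩
  · intro S hS
    simp only [Finset.mem_filter, Finset.mem_univ, true_and]
    unfold degIdx
    rw [Finset.mem_powersetCard] at hS
    rw [← hS.2]
    congr 1
    ext ℓ
    by_cases h : ℓ ∈ S <;> simp [h]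
  · intro j hj
    funext ℓ
    by_cases h : j ℓ = 0 <;> rcases zmod2_cases (j ℓ) with h' | h' <;> simp_all
  · intro S hS
    ext ℓ
    by_cases h : ℓ ∈ S <;> simp [h]
  · intro j hj; rfl

lemma esymm_one {ι : Type*} [DecidableEq ι] (s : Finset ι) (ε : ι → ℂ) :
    ∑ S ∈ Finset.powersetCard 1 s, ∏ ℓ ∈ S, ε ℓ = ∑ ℓ ∈ s, ε ℓ := by
  rw [Finset.powersetCard_one, Finset.sum_map]
  simp

lemma esymm_two {ι : Type*} [DecidableEq ι] (s : Finset ι) (ε : ι → ℂ)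
    (hsq : ∀ ℓ ∈ s, ε ℓ ^ 2 = 1) :
    2 * ∑ S ∈ Finset.powersetCard 2 s, ∏ ℓ ∈ S, ε ℓ
      = (∑ ℓ ∈ s, ε ℓ) ^ 2 - s.card := by
  induction s using Finset.induction_on with
  | empty =>
    rw [Finset.powersetCard_eq_empty.mpr (by simp)]
    simp
  | insert x s ha ih =>
    have hx : ε x ^ 2 = 1 := hsq x (Finset.mem_insert_self x s)
    have ih' := ih (fun ℓ hℓ => hsq ℓ (Finset.mem_insert_of_mem hℓ))
    have hdisj : Disjoint (Finset.powersetCard 2 s)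
        ((Finset.powersetCard 1 s).image (insert x)) := by
      rw [Finset.disjoint_left]
      intro S hS hS'
      rw [Finset.mem_powersetCard] at hS
      obtain ⟨T, hT, rfl⟩ := Finset.mem_image.mp hS'
      exact ha (hS.1 (Finset.mem_insert_self x T))
    have hinj : ∀ S ∈ Finset.powersetCard 1 s, ∀ T ∈ Finset.powersetCard 1 s,
        insert x S = insert x T → S = T := by
      intro S hS T hT h
      rw [Finset.mem_powersetCard] at hS hT
      have hxS : x ∉ S := fun hc => ha (hS.1 hc)
      have hxT : x ∉ T := fun hc => ha (hT.1 hc)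
      ext m
      constructor
      · intro hm
        have : m ∈ insert x T := h ▸ Finset.mem_insert_of_mem hm
        rcases Finset.mem_insert.mp this with rfl | hm'
        · exact absurd hm hxS
        · exact hm'
      · intro hm
        have : m ∈ insert x S := h ▸ Finset.mem_insert_of_mem hm
        rcases Finset.mem_insert.mp this with rfl | hm'
        · exact absurd hm hxT
        · exact hm'
    have himg : ∑ S ∈ (Finset.powersetCard 1 s).image (insert x), ∏ ℓ ∈ S, ε ℓ
        = ε x * ∑ ℓ ∈ s, ε ℓ := by
      rw [Finset.sum_image hinj, Finset.powersetCard_one, Finset.sum_map, Finset.mul_sum]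
      refine Finset.sum_congr rfl fun ℓ hℓ => ?_
      have hxℓ : x ∉ ({ℓ} : Finset ι) := by
        simp only [Finset.mem_singleton]; rintro rfl; exact ha hℓ
      rw [show (⟨fun a => ({a} : Finset ι), Finset.singleton_injective⟩ :
            ι ↪ Finset ι) ℓ = {ℓ} from rfl, Finset.prod_insert hxℓ, Finset.prod_singleton]
    rw [show ((2:ℕ)) = 1 + 1 from rfl, Finset.powersetCard_succ_insert ha,
        Finset.sum_union hdisj, himg, Finset.sum_insert ha,
        Finset.card_insert_of_notMem ha]
    push_cast
    linear_combination ih' - hx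

noncomputable def Lc {n : ℕ} (i : Fin n → ZMod 2) : ℂ := ∑ ℓ, (-1 : ℂ) ^ ((i ℓ).val)

lemma Lc_cons {n : ℕ} (x : ZMod 2) (i : Fin n → ZMod 2) :
    Lc (Fin.cons x i) = (-1 : ℂ) ^ x.val + Lc i := by
  unfold Lc
  rw [Fin.sum_univ_succ]
  simp

lemma Sm_succ (m n : ℕ) :
    ∑ i : Fin (n+1) → ZMod 2, (Lc i) ^ m
      = ∑ i : Fin n → ZMod 2, ((1 + Lc i) ^ m + (-1 + Lc i) ^ m) := by
  rw [← (Fin.consEquiv (fun _ : Fin (n+1) => ZMod 2)).sum_comp (fun i => (Lc i) ^ m)]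
  rw [Fintype.sum_prod_type]
  have hu : (Finset.univ : Finset (ZMod 2)) = {0, 1} := by decide
  rw [hu, Finset.sum_insert (by decide), Finset.sum_singleton, ← Finset.sum_add_distrib]
  refine Finset.sum_congr rfl fun i _ => ?_
  show (Lc (Fin.cons (0 : ZMod 2) i)) ^ m + (Lc (Fin.cons (1 : ZMod 2) i)) ^ m = _
  rw [Lc_cons, Lc_cons]
  norm_num [show ((0:ZMod 2)).val = 0 from rfl, show ((1:ZMod 2)).val = 1 from rfl]

lemma Sm0 (n : ℕ) : ∑ i : Fin n → ZMod 2, (Lc i) ^ 0 = 2 ^ n := by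
  simp [Finset.card_univ]

lemma Sm_base (m : ℕ) (hm : m ≠ 0) : ∑ i : Fin 0 → ZMod 2, (Lc i) ^ m = 0 := by
  have h : ∀ i : Fin 0 → ZMod 2, (Lc i) ^ m = 0 := by
    intro i; unfold Lc; simp [zero_pow hm]
  rw [Finset.sum_congr rfl fun i _ => h i, Finset.sum_const, smul_zero]

lemma Sm1 (n : ℕ) : ∑ i : Fin n → ZMod 2, (Lc i) ^ 1 = 0 := by
  induction n with
  | zero => exact Sm_base 1 one_ne_zero
  | succ n ih =>
    rw [Sm_succ]
    have h : ∀ i : Fin n → ZMod 2, (1 + Lc i) ^ 1 + (-1 + Lc i) ^ 1 = 2 * (Lc i) ^ 1 := by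
      intro i; ring
    simp_rw [h, ← Finset.mul_sum, ih, mul_zero]

lemma Sm2 (n : ℕ) : ∑ i : Fin n → ZMod 2, (Lc i) ^ 2 = 2 ^ n * n := by
  induction n with
  | zero => rw [Sm_base 2 two_ne_zero]; norm_num
  | succ n ih =>
    rw [Sm_succ]
    have h : ∀ i : Fin n → ZMod 2,
        (1 + Lc i) ^ 2 + (-1 + Lc i) ^ 2 = 2 * (Lc i) ^ 2 + 2 * (Lc i) ^ 0 := by
      intro i; ring
    simp_rw [h, Finset.sum_add_distrib, ← Finset.mul_sum, ih, Sm0]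
    push_cast; ring

lemma Sm3 (n : ℕ) : ∑ i : Fin n → ZMod 2, (Lc i) ^ 3 = 0 := by
  induction n with
  | zero => exact Sm_base 3 three_ne_zero
  | succ n ih =>
    rw [Sm_succ]
    have h : ∀ i : Fin n → ZMod 2,
        (1 + Lc i) ^ 3 + (-1 + Lc i) ^ 3 = 2 * (Lc i) ^ 3 + 6 * (Lc i) ^ 1 := by
      intro i; ring
    simp_rw [h, Finset.sum_add_distrib, ← Finset.mul_sum, ih, Sm1]
    ring

lemma Sm4 (n : ℕ) : ∑ i : Fin n → ZMod 2, (Lc i) ^ 4 = 2 ^ n * (3 * n ^ 2 - 2 * n) := by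
  induction n with
  | zero => rw [Sm_base 4 (by norm_num)]; norm_num
  | succ n ih =>
    rw [Sm_succ]
    have h : ∀ i : Fin n → ZMod 2,
        (1 + Lc i) ^ 4 + (-1 + Lc i) ^ 4
          = 2 * (Lc i) ^ 4 + 12 * (Lc i) ^ 2 + 2 * (Lc i) ^ 0 := by
      intro i; ring
    simp_rw [h, Finset.sum_add_distrib, ← Finset.mul_sum, ih, Sm2, Sm0]
    push_cast; ring

lemma Sm5 (n : ℕ) : ∑ i : Fin n → ZMod 2, (Lc i) ^ 5 = 0 := by
  induction n with
  | zero => exact Sm_base 5 (by norm_num)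
  | succ n ih =>
    rw [Sm_succ]
    have h : ∀ i : Fin n → ZMod 2,
        (1 + Lc i) ^ 5 + (-1 + Lc i) ^ 5
          = 2 * (Lc i) ^ 5 + 20 * (Lc i) ^ 3 + 10 * (Lc i) ^ 1 := by
      intro i; ring
    simp_rw [h, Finset.sum_add_distrib, ← Finset.mul_sum, ih, Sm3, Sm1]
    ring

lemma Sm6 (n : ℕ) :
    ∑ i : Fin n → ZMod 2, (Lc i) ^ 6 = 2 ^ n * (15 * n ^ 3 - 30 * n ^ 2 + 16 * n) := by
  induction n with
  | zero => rw [Sm_base 6 (by norm_num)]; norm_num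
  | succ n ih =>
    rw [Sm_succ]
    have h : ∀ i : Fin n → ZMod 2,
        (1 + Lc i) ^ 6 + (-1 + Lc i) ^ 6
          = 2 * (Lc i) ^ 6 + 30 * (Lc i) ^ 4 + 30 * (Lc i) ^ 2 + 2 * (Lc i) ^ 0 := by
      intro i; ring
    simp_rw [h, Finset.sum_add_distrib, ← Finset.mul_sum, ih, Sm4, Sm2, Sm0]
    push_cast; ring

lemma g_repr {n : ℕ} (f : (Fin n → ZMod 2) → ℂ) (d a : ℝ)
    (hdeg1 : ∀ j, degIdx j = 1 → wht f j = (d : ℂ))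
    (hdeg2 : ∀ j, degIdx j = 2 → wht f j = -(a : ℂ))
    (hother : ∀ j, degIdx j ≠ 1 → degIdx j ≠ 2 → wht f j = 0)
    (i : Fin n → ZMod 2) :
    f i - wht f 0 = (d : ℂ) * Lc i - (a : ℂ) * ((Lc i) ^ 2 - (n : ℂ)) / 2 := by
  classical
  set F : (Fin n → ZMod 2) → ℂ :=
    fun j => (-1 : ℂ) ^ (∑ ℓ, (i ℓ).val * (j ℓ).val) * wht f j with hF
  -- the three partial sums
  have hsplit1 := Finset.sum_filter_add_sum_filter_not Finset.univ
    (fun j : Fin n → ZMod 2 => degIdx j = 1) F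
  have hsplit2 := Finset.sum_filter_add_sum_filter_not
    (Finset.univ.filter (fun j : Fin n → ZMod 2 => ¬ degIdx j = 1))
    (fun j : Fin n → ZMod 2 => degIdx j = 2) F
  -- sum over degree-1 indices
  have hchi : ∀ k, ∑ j ∈ Finset.univ.filter (fun j : Fin n → ZMod 2 => degIdx j = k),
      (-1 : ℂ) ^ (∑ ℓ, (i ℓ).val * (j ℓ).val)
      = ∑ S ∈ Finset.powersetCard k (Finset.univ : Finset (Fin n)),
          ∏ ℓ ∈ S, (-1 : ℂ) ^ ((i ℓ).val) := by
    intro k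
    rw [← deg_sum_eq (fun ℓ => (-1 : ℂ) ^ ((i ℓ).val))]
    exact Finset.sum_congr rfl fun j _ => by rw [chi_prod, chi_supp]
  have h1 : ∑ j ∈ Finset.univ.filter (fun j : Fin n → ZMod 2 => degIdx j = 1), F j
      = (d : ℂ) * Lc i := by
    have e1 : ∑ j ∈ Finset.univ.filter (fun j : Fin n → ZMod 2 => degIdx j = 1), F j
        = ∑ j ∈ Finset.univ.filter (fun j : Fin n → ZMod 2 => degIdx j = 1),
            (-1 : ℂ) ^ (∑ ℓ, (i ℓ).val * (j ℓ).val) * (d : ℂ) := by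
      refine Finset.sum_congr rfl fun j hj => ?_
      simp only [Finset.mem_filter] at hj
      show (-1 : ℂ) ^ (∑ ℓ, (i ℓ).val * (j ℓ).val) * wht f j = _
      rw [hdeg1 j hj.2]
    rw [e1, ← Finset.sum_mul, hchi 1, esymm_one, mul_comm]
    rfl
  -- sum over degree-2 indices
  have hfilter : (Finset.univ.filter (fun j : Fin n → ZMod 2 => ¬ degIdx j = 1)).filter
      (fun j => degIdx j = 2)
      = Finset.univ.filter (fun j : Fin n → ZMod 2 => degIdx j = 2) := by
    rw [Finset.filter_filter]
    exact Finset.filter_congr fun j _ => by constructor <;> intro h <;> omega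
  have hsq : ∀ ℓ ∈ (Finset.univ : Finset (Fin n)), ((-1 : ℂ) ^ ((i ℓ).val)) ^ 2 = 1 := by
    intro ℓ _
    rw [← pow_mul, mul_comm, pow_mul]
    norm_num
  have h2' := esymm_two (Finset.univ : Finset (Fin n)) (fun ℓ => (-1 : ℂ) ^ ((i ℓ).val)) hsq
  rw [Finset.card_univ, Fintype.card_fin] at h2'
  have h2 : ∑ j ∈ Finset.univ.filter (fun j : Fin n → ZMod 2 => degIdx j = 2), F j
      = -(a : ℂ) * (((Lc i) ^ 2 - (n : ℂ)) / 2) := by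
    have e2 : ∑ j ∈ Finset.univ.filter (fun j : Fin n → ZMod 2 => degIdx j = 2), F j
        = ∑ j ∈ Finset.univ.filter (fun j : Fin n → ZMod 2 => degIdx j = 2),
            (-1 : ℂ) ^ (∑ ℓ, (i ℓ).val * (j ℓ).val) * (-(a : ℂ)) := by
      refine Finset.sum_congr rfl fun j hj => ?_
      simp only [Finset.mem_filter] at hj
      show (-1 : ℂ) ^ (∑ ℓ, (i ℓ).val * (j ℓ).val) * wht f j = _
      rw [hdeg2 j hj.2]
    rw [e2, ← Finset.sum_mul, hchi 2, mul_comm]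
    congr 1
    have : (Lc i) ^ 2 - (n : ℂ)
        = 2 * ∑ S ∈ Finset.powersetCard 2 (Finset.univ : Finset (Fin n)),
            ∏ ℓ ∈ S, (-1 : ℂ) ^ ((i ℓ).val) := h2'.symm
    rw [this]
    ring
  -- sum over remaining indices
  have hrest : ∑ j ∈ ((Finset.univ.filter (fun j : Fin n → ZMod 2 => ¬ degIdx j = 1)).filter
      (fun j => ¬ degIdx j = 2)), F j = wht f 0 := by
    have hdeg0 : degIdx (0 : Fin n → ZMod 2) = 0 := by
      unfold degIdx
      rw [Finset.filter_false_of_mem (fun ℓ _ => by simp)]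
      simp
    have hmem : (0 : Fin n → ZMod 2) ∈
        ((Finset.univ.filter (fun j : Fin n → ZMod 2 => ¬ degIdx j = 1)).filter
          (fun j => ¬ degIdx j = 2)) := by
      simp [hdeg0]
    rw [Finset.sum_eq_single_of_mem 0 hmem (fun j hj hj0 => by
      simp only [Finset.mem_filter] at hj
      show (-1 : ℂ) ^ (∑ ℓ, (i ℓ).val * (j ℓ).val) * wht f j = 0
      rw [hother j hj.1.2 hj.2, mul_zero])]
    show (-1 : ℂ) ^ (∑ ℓ, (i ℓ).val * (((0 : Fin n → ZMod 2)) ℓ).val) * wht f 0 = _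
    have : (∑ ℓ, (i ℓ).val * ((0 : Fin n → ZMod 2) ℓ).val) = 0 := by
      simp [show ((0:ZMod 2)).val = 0 from rfl]
    rw [this, pow_zero, one_mul]
  have hinv := inversion f i
  rw [← hsplit1, ← hsplit2, hfilter] at hinv
  rw [h1, h2, hrest] at hinv
  rw [hinv]
  ring

end Aux

theorem complete_graph_moments
    {n : ℕ} (hn : 1 ≤ n) (f : (Fin n → ZMod 2) → ℂ) (d a : ℝ)
    (hd : d ^ 2 = 1)
    (hdeg1 : ∀ j, degIdx j = 1 → wht f j = (d : ℂ))
    (hdeg2 : ∀ j, degIdx j = 2 → wht f j = -(a : ℂ))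
    (hother : ∀ j, degIdx j ≠ 1 → degIdx j ≠ 2 → wht f j = 0) :
    ((2 : ℂ) ^ n)⁻¹ * (∑ i, (f i - wht f 0) ^ 2)
        = (n : ℂ) + (n : ℂ) * ((n : ℂ) - 1) * (a : ℂ) ^ 2 / 2
    ∧ ((2 : ℂ) ^ n)⁻¹ * (∑ i, (f i - wht f 0) ^ 3)
        = -(3 * (n : ℂ) * ((n : ℂ) - 1) * (a : ℂ))
          - (n : ℂ) * ((n : ℂ) - 1) * ((n : ℂ) - 2) * (a : ℂ) ^ 3 := by
  have hD2 : (d : ℂ) ^ 2 = 1 := by exact_mod_cast hd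
  have h2n : ((2 : ℂ) ^ n) ≠ 0 := pow_ne_zero _ two_ne_zero
  have hg := g_repr f d a hdeg1 hdeg2 hother
  set D := (d : ℂ)
  set A := (a : ℂ)
  set N := (n : ℂ)
  constructor
  · have expand : ∀ i : Fin n → ZMod 2, (f i - wht f 0) ^ 2
        = (A ^ 2 / 4) * (Lc i) ^ 4 + (-(D * A)) * (Lc i) ^ 3
          + (1 - A ^ 2 * N / 2) * (Lc i) ^ 2 + (D * A * N) * (Lc i) ^ 1
          + (A ^ 2 * N ^ 2 / 4) * (Lc i) ^ 0 := by
      intro i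
      rw [hg i]
      linear_combination (Lc i) ^ 2 * hD2
    rw [Finset.sum_congr rfl fun i _ => expand i]
    simp_rw [Finset.sum_add_distrib, ← Finset.mul_sum, Sm0, Sm1, Sm2, Sm3, Sm4]
    field_simp
    ring
  · have expand : ∀ i : Fin n → ZMod 2, (f i - wht f 0) ^ 3
        = (-(A ^ 3 / 8)) * (Lc i) ^ 6 + (3 * D * A ^ 2 / 4) * (Lc i) ^ 5
          + (-(3 * A / 2) + 3 * N * A ^ 3 / 8) * (Lc i) ^ 4
          + (D - 3 * D * A ^ 2 * N / 2) * (Lc i) ^ 3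
          + (3 * A * N / 2 - 3 * N ^ 2 * A ^ 3 / 8) * (Lc i) ^ 2
          + (3 * D * A ^ 2 * N ^ 2 / 4) * (Lc i) ^ 1
          + (A ^ 3 * N ^ 3 / 8) * (Lc i) ^ 0 := by
      intro i
      rw [hg i]
      linear_combination (D * (Lc i) ^ 3 - (3 * A / 2) * ((Lc i) ^ 4 - N * (Lc i) ^ 2)) * hD2
    rw [Finset.sum_congr rfl fun i _ => expand i]
    simp_rw [Finset.sum_add_distrib, ← Finset.mul_sum, Sm0, Sm1, Sm2, Sm3, Sm4, Sm5, Sm6]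
    field_simp
    ring
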